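/- arXiv:0801.3819 — 3 statements merged into one kernel-verified Lean document; each statement's English description precedes it below -/
import Mathlib

section
/- Let G be a group and ρ : G →* SU(2) a group homomorphism. There exists a nonzero vector v ∈ ℂ² such that for every g ∈ G the vector ρ(g)·v lies in the complex line spanned by v (i.e., ρ is reducible) if and only if the range of ρ is a commutative subgroup of SU(2). In particular, ρ is irreducible if and only if ρ is non-abelian. -/
open Matrix

/-- `SU2` is the group of 2×2 complex unitary matrices of determinant 1. -/
noncomputable abbrev SU2 : Submonoid (Matrix (Fin 2) (Fin 2) ℂ) :=
  Matrix.specialUnitaryGroup (Fin 2) ℂ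

lemma su2_entries {A : Matrix (Fin 2) (Fin 2) ℂ} (hA : A ∈ SU2) :
    A 1 1 = (starRingEnd ℂ) (A 0 0) ∧ A 1 0 = -(starRingEnd ℂ) (A 0 1) := by
  rw [Matrix.mem_specialUnitaryGroup_iff] at hA
  obtain ⟨hU, hdet⟩ := hA
  have h1 : star A * A = 1 := Matrix.mem_unitaryGroup_iff'.mp hU
  have h2 : A * A.adjugate = 1 := by rw [Matrix.mul_adjugate, hdet, one_smul]
  have hsa : star A = A.adjugate := by
    calc star A = star A * (A * A.adjugate) := by rw [h2, mul_one]
    _ = (star A * A) * A.adjugate := by rw [mul_assoc]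
    _ = A.adjugate := by rw [h1, one_mul]
  have e1 := congrFun (congrFun hsa 0) 0
  have e2 := congrFun (congrFun hsa 0) 1
  simp [Matrix.adjugate_fin_two, Matrix.star_apply] at e1 e2
  refine ⟨e1.symm, ?_⟩
  have := congrArg (starRingEnd ℂ) e2
  simpa using this

lemma su2_eig_w {A : Matrix (Fin 2) (Fin 2) ℂ} (hA : A ∈ SU2) {v : Fin 2 → ℂ} {c : ℂ}
    (h : A *ᵥ v = c • v) :
    A *ᵥ ![-(starRingEnd ℂ) (v 1), (starRingEnd ℂ) (v 0)] =
      (starRingEnd ℂ) c • ![-(starRingEnd ℂ) (v 1), (starRingEnd ℂ) (v 0)] := by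
  obtain ⟨hd, hc⟩ := su2_entries hA
  have h0 := congrFun h 0
  have h1 := congrFun h 1
  simp only [Matrix.mulVec, dotProduct, Fin.sum_univ_two, Pi.smul_apply,
    smul_eq_mul] at h0 h1
  rw [hd, hc] at h1
  have h0' := congrArg (starRingEnd ℂ) h0
  have h1' := congrArg (starRingEnd ℂ) h1
  simp only [map_add, _root_.map_mul, map_neg, Complex.conj_conj] at h0' h1'
  funext i
  fin_cases i <;>
    simp only [Matrix.mulVec, dotProduct, Fin.sum_univ_two, Pi.smul_apply, smul_eq_mul,
      Fin.zero_eta, Fin.mk_one, Fin.isValue, Matrix.cons_val_zero, Matrix.cons_val_one,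
      Matrix.head_cons, hd, hc]
  · linear_combination -h1'
  · linear_combination h0'

lemma su2_comm {A B : Matrix (Fin 2) (Fin 2) ℂ} (hA : A ∈ SU2) (hB : B ∈ SU2)
    {v : Fin 2 → ℂ} (hv : v ≠ 0) {c d : ℂ}
    (hAv : A *ᵥ v = c • v) (hBv : B *ᵥ v = d • v) : A * B = B * A := by
  set w : Fin 2 → ℂ := ![-(starRingEnd ℂ) (v 1), (starRingEnd ℂ) (v 0)] with hw
  have hAw := su2_eig_w hA hAv
  have hBw := su2_eig_w hB hBv
  have key1 : (A * B) *ᵥ v = (B * A) *ᵥ v := by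
    rw [← Matrix.mulVec_mulVec, ← Matrix.mulVec_mulVec, hBv, hAv, Matrix.mulVec_smul,
      Matrix.mulVec_smul, hAv, hBv, smul_smul, smul_smul, mul_comm]
  have key2 : (A * B) *ᵥ w = (B * A) *ᵥ w := by
    rw [← Matrix.mulVec_mulVec, ← Matrix.mulVec_mulVec, hBw, hAw, Matrix.mulVec_smul,
      Matrix.mulVec_smul, hAw, hBw, smul_smul, smul_smul, mul_comm]
  set N : Matrix (Fin 2) (Fin 2) ℂ := (Matrix.of ![v, w])ᵀ with hN
  have hdet : N.det ≠ 0 := by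
    rw [hN, Matrix.det_transpose, Matrix.det_fin_two]
    simp only [Matrix.of_apply, Matrix.cons_val', Matrix.cons_val_zero, Matrix.cons_val_one,
      Matrix.head_cons, hw, Matrix.empty_val', Matrix.cons_val_fin_one, Matrix.head_fin_const]
    intro hzero
    apply hv
    have : v 0 * (starRingEnd ℂ) (v 0) + v 1 * (starRingEnd ℂ) (v 1) = 0 := by
      linear_combination hzero
    rw [Complex.mul_conj, Complex.mul_conj, ← Complex.ofReal_add] at this
    have hre : Complex.normSq (v 0) + Complex.normSq (v 1) = 0 := by exact_mod_cast this
    have h0 : Complex.normSq (v 0) = 0 := by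
      nlinarith [Complex.normSq_nonneg (v 0), Complex.normSq_nonneg (v 1)]
    have h1 : Complex.normSq (v 1) = 0 := by
      nlinarith [Complex.normSq_nonneg (v 0), Complex.normSq_nonneg (v 1)]
    funext i
    fin_cases i
    · exact Complex.normSq_eq_zero.mp h0
    · exact Complex.normSq_eq_zero.mp h1
  have hmul : (A * B) * N = (B * A) * N := by
    ext i j
    have k1 := congrFun key1 i
    have k2 := congrFun key2 i
    simp only [Matrix.mulVec, dotProduct, Fin.sum_univ_two, Matrix.mul_apply] at k1 k2
    fin_cases j <;>
      simp only [Matrix.mul_apply, Fin.sum_univ_two, hN, Matrix.transpose_apply,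
        Matrix.of_apply, Matrix.cons_val_zero, Matrix.cons_val_one, Matrix.head_cons,
        Fin.zero_eta, Fin.mk_one, Fin.isValue]
    · linear_combination k1
    · linear_combination k2
  have hinv : N * N⁻¹ = 1 := Matrix.mul_nonsing_inv N (isUnit_iff_ne_zero.mpr hdet)
  have h := congrArg (· * N⁻¹) hmul
  simpa only [mul_assoc, hinv, mul_one] using h
/-- A homomorphism `ρ : G →* SU(2)` is reducible (there is a nonzero vector `v ∈ ℂ²` such
that every `ρ(g)·v` lies in the complex line spanned by `v`) if and only if the range of `ρ`
is commutative; in particular `ρ` is irreducible if and only if it is non-abelian. -/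
theorem su2_reducible_iff_range_abelian {G : Type*} [Group G] (ρ : G →* SU2) :
    ((∃ v : Fin 2 → ℂ, v ≠ 0 ∧ ∀ g : G, ∃ c : ℂ, (ρ g).1 *ᵥ v = c • v) ↔
      ∀ a b : G, ρ a * ρ b = ρ b * ρ a) ∧
    ((¬ ∃ v : Fin 2 → ℂ, v ≠ 0 ∧ ∀ g : G, ∃ c : ℂ, (ρ g).1 *ᵥ v = c • v) ↔
      ¬ ∀ a b : G, ρ a * ρ b = ρ b * ρ a) := by
  have key : (∃ v : Fin 2 → ℂ, v ≠ 0 ∧ ∀ g : G, ∃ c : ℂ, (ρ g).1 *ᵥ v = c • v) ↔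
      ∀ a b : G, ρ a * ρ b = ρ b * ρ a := by
    constructor
    · rintro ⟨v, hv, hvg⟩ a b
      obtain ⟨c, hc⟩ := hvg a
      obtain ⟨d, hd⟩ := hvg b
      have := su2_comm (ρ a).2 (ρ b).2 hv hc hd
      exact Subtype.ext this
    · intro hcomm
      by_cases hsc : ∀ g : G, ∃ c : ℂ, (ρ g).1 = c • (1 : Matrix (Fin 2) (Fin 2) ℂ)
      · refine ⟨![1, 0], ?_, fun g => ?_⟩
        · intro h
          have := congrFun h 0
          simp at this
        · obtain ⟨c, hc⟩ := hsc g
          exact ⟨c, by rw [hc, Matrix.smul_mulVec, Matrix.one_mulVec]⟩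
      · push_neg at hsc
        obtain ⟨g₀, hg₀⟩ := hsc
        set A : Matrix (Fin 2) (Fin 2) ℂ := (ρ g₀).1 with hAdef
        set f : Module.End ℂ (Fin 2 → ℂ) := A.mulVecLin with hfdef
        obtain ⟨μ, hμ⟩ := Module.End.exists_eigenvalue f
        obtain ⟨v, hvE, hv⟩ := hμ.exists_hasEigenvector
        set E := Module.End.eigenspace f μ with hEdef
        have hEv : v ∈ E := hvE
        have hfinE : Module.finrank ℂ E ≤ 1 := by
          by_contra hgt
          push_neg at hgt
          have hle : Module.finrank ℂ E ≤ 2 := by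
            have := Submodule.finrank_le E
            rwa [Module.finrank_fin_fun ℂ] at this
          have heq : Module.finrank ℂ E = Module.finrank ℂ (Fin 2 → ℂ) := by
            rw [Module.finrank_fin_fun ℂ]; omega
          have hEtop : E = ⊤ := Submodule.eq_top_of_finrank_eq heq
          apply hg₀ μ
          ext i j
          have hx : (Pi.single j 1 : Fin 2 → ℂ) ∈ E := hEtop ▸ Submodule.mem_top
          rw [Module.End.mem_eigenspace_iff] at hx
          have := congrFun hx i
          simp only [hfdef, Matrix.mulVecLin_apply, Matrix.mulVec, dotProduct,
            Fin.sum_univ_two, Pi.smul_apply, smul_eq_mul, Pi.single_apply,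
            Matrix.smul_apply, Matrix.one_apply] at this ⊢
          fin_cases i <;> fin_cases j <;> simp_all
        have hspan : (Submodule.span ℂ {v} : Submodule ℂ (Fin 2 → ℂ)) = E := by
          apply Submodule.eq_of_le_of_finrank_le
          · rw [Submodule.span_le, Set.singleton_subset_iff]; exact hEv
          · rwa [finrank_span_singleton hv]
        refine ⟨v, hv, fun g => ?_⟩
        set B : Matrix (Fin 2) (Fin 2) ℂ := (ρ g).1 with hBdef
        have hABcomm : A * B = B * A := by
          have := hcomm g₀ g
          have := congrArg (Subtype.val) this
          simpa using this
        have hBvE : B *ᵥ v ∈ E := by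
          rw [Module.End.mem_eigenspace_iff]
          have hfv : f v = μ • v := Module.End.mem_eigenspace_iff.mp hEv
          simp only [hfdef, Matrix.mulVecLin_apply] at hfv ⊢
          rw [Matrix.mulVec_mulVec, hABcomm, ← Matrix.mulVec_mulVec, hfv, Matrix.mulVec_smul]
        rw [← hspan, Submodule.mem_span_singleton] at hBvE
        obtain ⟨c, hc⟩ := hBvE
        exact ⟨c, hc.symm⟩
  exact ⟨key, not_congr key⟩
end

section
/- Let A, B ∈ SU(2) with A·B = B·A and A ≠ ±1. Then B·P_A·B⁻¹ = P_A, where P_A is from the unique decomposition A = (cos θ_A)·1 + (sin θ_A)·P_A with θ_A ∈ (0,π) and P_A ∈ su(2). -/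
/-! Subtracting the central part `(cos θ)·1` shows that `B` commutes with `(sin θ)·P`, and
`sin θ ≠ 0` on `(0, π)`; so `B` commutes with `P`, and conjugating by the invertible `B` fixes it. -/

open Matrix Real Set

theorem Commute.of_smul_one_add_smul_left {K R : Type*} [Field K] [Ring R] [Algebra K R]
    {a b : K} {P B : R} (hb : b ≠ 0) (h : Commute (a • 1 + b • P) B) : Commute P B := by
  have hbP : Commute (b • P) B := by
    simpa using h.sub_left ((Commute.one_left B).smul_left a)
  simpa [smul_smul, hb] using hbP.smul_left b⁻¹

theorem su2_commuting_fixes_axis_general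
    (A B : Matrix (Fin 2) (Fin 2) ℂ) (hB : B ∈ SU2)
    (hcomm : A * B = B * A)
    (θ : ℝ) (P : Matrix (Fin 2) (Fin 2) ℂ)
    (hθ : θ ∈ Set.Ioo 0 π)
    (hdec : A = Real.cos θ • (1 : Matrix (Fin 2) (Fin 2) ℂ) + Real.sin θ • P) :
    B * P * B⁻¹ = P := by
  have hsin : Real.sin θ ≠ 0 := (Real.sin_pos_of_pos_of_lt_pi hθ.1 hθ.2).ne'
  have hPB : Commute P B := Commute.of_smul_one_add_smul_left hsin (hdec ▸ hcomm)
  have hdetB : B.det = 1 := (Matrix.mem_specialUnitaryGroup_iff.mp hB).2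
  rw [← hPB.eq, Matrix.mul_nonsing_inv_cancel_right _ _ (by simp [hdetB])]

/-- If `A, B ∈ SU(2)` commute and `A ≠ ±1`, with `A = (cos θ)·1 + (sin θ)·P` the unique
decomposition of `A` (`θ ∈ (0,π)`, `P ∈ su(2)`), then `B·P·B⁻¹ = P`. -/
theorem su2_commuting_fixes_axis
    (A B : Matrix (Fin 2) (Fin 2) ℂ) (hA : A ∈ SU2) (hB : B ∈ SU2)
    (hcomm : A * B = B * A) (h1 : A ≠ 1) (h2 : A ≠ -1)
    (θ : ℝ) (P : Matrix (Fin 2) (Fin 2) ℂ)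
    (hθ : θ ∈ Set.Ioo 0 π) (hP1 : Pᴴ = -P) (hP2 : P.trace = 0)
    (hdec : A = Real.cos θ • (1 : Matrix (Fin 2) (Fin 2) ℂ) + Real.sin θ • P) :
    B * P * B⁻¹ = P :=
  su2_commuting_fixes_axis_general A B hB hcomm θ P hθ hdec
end

section
/- Let A, B ∈ SU(2) with A·B = B·A, A ≠ ±1, and B ≠ ±1. Then there exist δ' ∈ {1, -1} and θ' ∈ (0, π) such that B = (cos θ')·1 + δ'·(sin θ')·P_A. In particular P_B = P_A or P_B = -P_A. -/
open Matrix Real Set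

private lemma mysq (X : Matrix (Fin 2) (Fin 2) ℂ) :
    X * X = X.trace • X - X.det • (1 : Matrix (Fin 2) (Fin 2) ℂ) := by
  rw [Matrix.eta_fin_two X]
  ext i j
  fin_cases i <;> fin_cases j <;>
    simp [Matrix.mul_apply, Fin.sum_univ_two, Matrix.trace_fin_two, Matrix.det_fin_two,
      Matrix.one_apply] <;> ring

private lemma real_smul_mat (r : ℝ) (M : Matrix (Fin 2) (Fin 2) ℂ) : r • M = (r : ℂ) • M := by
  ext i j; simp [Matrix.smul_apply, Complex.real_smul]

private lemma core (P Q : Matrix (Fin 2) (Fin 2) ℂ) (hP : P.trace = 0) (hQ : Q.trace = 0)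
    (hP2 : P * P = -1) (hQ2 : Q * Q = -1) (hc : P * Q = Q * P) : Q = P ∨ Q = -P := by
  set d : ℂ := (2 - (P + Q).det) / 2 with hd
  have h1 : (P + Q) * (P + Q) = (-(P + Q).det) • 1 := by
    rw [mysq, Matrix.trace_add, hP, hQ]; simp
  have h2 : (P + Q) * (P + Q) = -1 + (2 : ℂ) • (P * Q) + -1 := by
    rw [mul_add, add_mul, add_mul, hP2, hQ2, ← hc]
    module
  have h3 : (2 : ℂ) • (P * Q) = ((2 : ℂ) - (P + Q).det) • 1 := by
    have := h1.symm.trans h2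
    rw [sub_smul]
    linear_combination (norm := module) -this
  have hPQ : P * Q = d • 1 := by
    have h4 : (2 : ℂ) • (P * Q) = (2 : ℂ) • (d • (1 : Matrix (Fin 2) (Fin 2) ℂ)) := by
      rw [h3, smul_smul, hd]; ring_nf
    exact smul_right_injective _ (by norm_num : (2:ℂ) ≠ 0) h4
  have hQP : Q = (-d) • P := by
    have h5 : P * (P * Q) = P * (d • 1) := by rw [hPQ]
    rw [← mul_assoc, hP2, mul_smul_comm, mul_one] at h5
    have : Q = -(d • P) := by
      have := congrArg Neg.neg h5
      simpa using this
    simpa [neg_smul] using this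
  have hd2 : d * d = 1 := by
    have h6 : ((-d) • P) * ((-d) • P) = -1 := by rw [← hQP]; exact hQ2
    rw [smul_mul_smul_comm, hP2] at h6
    have h7 : (d * d) • (1 : Matrix (Fin 2) (Fin 2) ℂ) = 1 := by
      have := congrArg Neg.neg h6
      simpa [neg_smul, smul_neg] using this
    have := congrFun (congrFun h7 0) 0
    simpa [Matrix.smul_apply, Matrix.one_apply] using this
  rcases mul_self_eq_one_iff.mp hd2 with h | h
  · right; rw [hQP, h]; simp
  · left; rw [hQP, h]; simp

private lemma expand2 (Q : Matrix (Fin 2) (Fin 2) ℂ) (c s : ℂ) :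
    (c • (1 : Matrix (Fin 2) (Fin 2) ℂ) + s • Q) * (c • 1 - s • Q)
      = (c * c) • 1 - (s * s) • (Q * Q) := by
  rw [mul_sub, add_mul, add_mul]
  simp only [smul_mul_smul_comm, Matrix.one_mul, Matrix.mul_one, mul_smul_comm, smul_mul_assoc]
  module

private lemma sqneg' (C Q : Matrix (Fin 2) (Fin 2) ℂ) (c s : ℂ) (hu : C * Cᴴ = 1)
    (hQ : Qᴴ = -Q) (hcs : c * c + s * s = 1) (hs : s ≠ 0)
    (hc1 : star c = c) (hs1 : star s = s)
    (hd : C = c • 1 + s • Q) : Q * Q = -1 := by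
  have hCH : Cᴴ = c • 1 - s • Q := by
    rw [hd]
    simp only [Matrix.conjTranspose_add, Matrix.conjTranspose_smul, Matrix.conjTranspose_one,
      hQ, hc1, hs1, smul_neg, sub_eq_add_neg]
  rw [hCH, hd, expand2] at hu
  have key : (s * s) • (Q * Q) = (s * s) • (-1 : Matrix (Fin 2) (Fin 2) ℂ) := by
    have hone : (c * c) • (1 : Matrix (Fin 2) (Fin 2) ℂ)
        + (s * s) • (1 : Matrix (Fin 2) (Fin 2) ℂ) = 1 := by
      rw [← add_smul, hcs, one_smul]
    linear_combination (norm := module) hone - hu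
  exact smul_right_injective _ (mul_ne_zero hs hs) key

private lemma comm_extract (A B P : Matrix (Fin 2) (Fin 2) ℂ) (c s : ℂ) (hs : s ≠ 0)
    (hcomm : A * B = B * A) (hd : A = c • 1 + s • P) : P * B = B * P := by
  have h1 : A * B = c • B + s • (P * B) := by
    rw [hd, add_mul, smul_mul_assoc, smul_mul_assoc, Matrix.one_mul]
  have h2 : B * A = c • B + s • (B * P) := by
    rw [hd, mul_add, mul_smul_comm, mul_smul_comm, Matrix.mul_one]
  have h := (h1.symm.trans (hcomm.trans h2))
  exact smul_right_injective _ hs (add_left_cancel h)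

private lemma comm_cancel (B P Q : Matrix (Fin 2) (Fin 2) ℂ) (c s : ℂ) (hs : s ≠ 0)
    (hPB : P * B = B * P) (hd : B = c • 1 + s • Q) : P * Q = Q * P := by
  have h1 : P * B = c • P + s • (P * Q) := by
    rw [hd, mul_add, mul_smul_comm, mul_smul_comm, Matrix.mul_one]
  have h2 : B * P = c • P + s • (Q * P) := by
    rw [hd, add_mul, smul_mul_assoc, smul_mul_assoc, Matrix.one_mul]
  have h := (h1.symm.trans (hPB.trans h2))
  exact smul_right_injective _ hs (add_left_cancel h)

private lemma adj2 (B : Matrix (Fin 2) (Fin 2) ℂ) : B.adjugate = B.trace • 1 - B := by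
  rw [Matrix.eta_fin_two B, Matrix.adjugate_fin_two]
  ext i j
  fin_cases i <;> fin_cases j <;>
    simp [Matrix.trace_fin_two, Matrix.one_apply] <;> ring

private lemma conj_eq (B : Matrix (Fin 2) (Fin 2) ℂ) (h1 : Bᴴ * B = 1) (h2 : B.det = 1) :
    Bᴴ = B.trace • 1 - B := by
  have hml : B * B.adjugate = 1 := by rw [Matrix.mul_adjugate, h2, one_smul]
  have : Bᴴ = B.adjugate := by
    calc Bᴴ = Bᴴ * (B * B.adjugate) := by rw [hml, mul_one]
    _ = (Bᴴ * B) * B.adjugate := by rw [mul_assoc]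
    _ = B.adjugate := by rw [h1, one_mul]
  rw [this, adj2]

private lemma Xsq (B : Matrix (Fin 2) (Fin 2) ℂ) (γ : ℂ)
    (hBB : B * B = (2 * γ) • B - 1) :
    (B - γ • 1) * (B - γ • 1) = (γ * γ - 1) • 1 := by
  rw [sub_mul, mul_sub, mul_sub, hBB]
  simp only [smul_mul_assoc, mul_smul_comm, Matrix.one_mul, Matrix.mul_one, smul_smul]
  module

/-- If `A, B ∈ SU(2)` commute, `A ≠ ±1` and `B ≠ ±1`, with `A = (cos θ)·1 + (sin θ)·P` the
unique decomposition of `A` (`θ ∈ (0,π)`, `P ∈ su(2)`), then there exist `δ' ∈ {1,-1}` and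
`θ' ∈ (0,π)` with `B = (cos θ')·1 + δ'·(sin θ')·P`; in particular the unique decomposition
`B = (cos θ_B)·1 + (sin θ_B)·P_B` of `B` satisfies `P_B = P` or `P_B = -P`. -/
theorem su2_commuting_decomposition
    (A B : Matrix (Fin 2) (Fin 2) ℂ) (hA : A ∈ SU2) (hB : B ∈ SU2)
    (hcomm : A * B = B * A) (hA1 : A ≠ 1) (hA2 : A ≠ -1) (hB1 : B ≠ 1) (hB2 : B ≠ -1)
    (θ : ℝ) (P : Matrix (Fin 2) (Fin 2) ℂ)
    (hθ : θ ∈ Set.Ioo 0 π) (hP1 : Pᴴ = -P) (hP2 : P.trace = 0)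
    (hdec : A = Real.cos θ • (1 : Matrix (Fin 2) (Fin 2) ℂ) + Real.sin θ • P) :
    (∃ δ' θ' : ℝ, (δ' = 1 ∨ δ' = -1) ∧ θ' ∈ Set.Ioo 0 π ∧
      B = Real.cos θ' • (1 : Matrix (Fin 2) (Fin 2) ℂ) + (δ' * Real.sin θ') • P) ∧
    (∀ (θB : ℝ) (PB : Matrix (Fin 2) (Fin 2) ℂ),
      θB ∈ Set.Ioo 0 π → PBᴴ = -PB → PB.trace = 0 →
      B = Real.cos θB • (1 : Matrix (Fin 2) (Fin 2) ℂ) + Real.sin θB • PB →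
      PB = P ∨ PB = -P) := by
  obtain ⟨hAu', hAdet⟩ := Matrix.mem_specialUnitaryGroup_iff.mp hA
  obtain ⟨hBu', hBdet⟩ := Matrix.mem_specialUnitaryGroup_iff.mp hB
  have hAu : A * Aᴴ = 1 := by
    have := Matrix.mem_unitaryGroup_iff.mp hAu'
    rwa [Matrix.star_eq_conjTranspose] at this
  have hBu : B * Bᴴ = 1 := by
    have := Matrix.mem_unitaryGroup_iff.mp hBu'
    rwa [Matrix.star_eq_conjTranspose] at this
  have hBu2 : Bᴴ * B = 1 := by
    have := Matrix.mem_unitaryGroup_iff'.mp hBu'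
    rwa [Matrix.star_eq_conjTranspose] at this
  have hcoscos : ∀ t : ℝ, ((Real.cos t : ℂ)) * (Real.cos t : ℂ)
      + (Real.sin t : ℂ) * (Real.sin t : ℂ) = 1 := by
    intro t
    have hr : Real.cos t * Real.cos t + Real.sin t * Real.sin t = 1 := by
      have := Real.sin_sq_add_cos_sq t
      nlinarith
    exact_mod_cast hr
  have hstar : ∀ r : ℝ, star ((r : ℂ)) = (r : ℂ) := fun r => Complex.conj_ofReal r
  have hsθ : Real.sin θ ≠ 0 := ne_of_gt (Real.sin_pos_of_pos_of_lt_pi hθ.1 hθ.2)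
  have hsθC : ((Real.sin θ : ℂ)) ≠ 0 := by exact_mod_cast hsθ
  have hdecC : A = (Real.cos θ : ℂ) • (1 : Matrix (Fin 2) (Fin 2) ℂ)
      + (Real.sin θ : ℂ) • P := by
    rw [hdec, real_smul_mat, real_smul_mat]
  have hPP : P * P = -1 :=
    sqneg' A P _ _ hAu hP1 (hcoscos θ) hsθC (hstar _) (hstar _) hdecC
  have hPB : P * B = B * P := comm_extract A B P _ _ hsθC hcomm hdecC
  -- the uniqueness part
  have main2 : ∀ (θB : ℝ) (PB : Matrix (Fin 2) (Fin 2) ℂ),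
      θB ∈ Set.Ioo 0 π → PBᴴ = -PB → PB.trace = 0 →
      B = Real.cos θB • (1 : Matrix (Fin 2) (Fin 2) ℂ) + Real.sin θB • PB →
      PB = P ∨ PB = -P := by
    intro θB PB hθB hPB1 hPB2 hdB
    have hsB : ((Real.sin θB : ℂ)) ≠ 0 := by
      exact_mod_cast ne_of_gt (Real.sin_pos_of_pos_of_lt_pi hθB.1 hθB.2)
    have hdBC : B = (Real.cos θB : ℂ) • (1 : Matrix (Fin 2) (Fin 2) ℂ)
        + (Real.sin θB : ℂ) • PB := by
      rw [hdB, real_smul_mat, real_smul_mat]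
    have hQQ : PB * PB = -1 :=
      sqneg' B PB _ _ hBu hPB1 (hcoscos θB) hsB (hstar _) (hstar _) hdBC
    have hcPQ : P * PB = PB * P := comm_cancel B P PB _ _ hsB hPB hdBC
    exact core P PB hP2 hPB2 hPP hQQ hcPQ
  refine ⟨?_, main2⟩
  -- construct a decomposition of B
  have hBH : Bᴴ = B.trace • 1 - B := conj_eq B hBu2 hBdet
  have htrstar : star B.trace = B.trace := by
    have h := congrArg Matrix.trace hBH
    rw [Matrix.trace_conjTranspose] at h
    rw [h, Matrix.trace_sub, Matrix.trace_smul, Matrix.trace_one]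
    simp only [smul_eq_mul, Fintype.card_fin]
    push_cast
    ring
  set c : ℝ := B.trace.re / 2 with hc
  have htrC : B.trace = 2 * (c : ℂ) := by
    have hre : B.trace = (B.trace.re : ℂ) := (Complex.conj_eq_iff_re.mp htrstar).symm
    rw [hre, hc]
    push_cast
    ring
  set X : Matrix (Fin 2) (Fin 2) ℂ := B - (c : ℂ) • 1 with hX
  have hXH : Xᴴ = -X := by
    rw [hX, Matrix.conjTranspose_sub, Matrix.conjTranspose_smul, Matrix.conjTranspose_one,
      hBH, htrC, hstar]
    module
  have hBB : B * B = (2 * (c:ℂ)) • B - 1 := by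
    rw [mysq, htrC, hBdet, one_smul]
  have hXX : X * X = ((c:ℂ) * (c:ℂ) - 1) • 1 := Xsq B _ hBB
  have hXHX : Xᴴ * X = (((1 - c^2 : ℝ)) : ℂ) • 1 := by
    rw [hXH, Matrix.neg_mul, hXX, ← neg_smul]
    congr 1
    push_cast
    ring
  have hpos : 0 ≤ 1 - c^2 := by
    have e00 := congrFun (congrFun hXHX 0) 0
    simp only [Matrix.mul_apply, Fin.sum_univ_two, Matrix.conjTranspose_apply,
      Matrix.smul_apply, Matrix.one_apply_eq, smul_eq_mul, mul_one] at e00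
    have e00' : ((1 - c^2 : ℝ) : ℂ)
        = (Complex.normSq (X 0 0) : ℂ) + (Complex.normSq (X 1 0) : ℂ) := by
      rw [← e00]
      rw [Complex.normSq_eq_conj_mul_self, Complex.normSq_eq_conj_mul_self]
      rfl
    have : (1 - c^2 : ℝ) = Complex.normSq (X 0 0) + Complex.normSq (X 1 0) := by
      exact_mod_cast e00'
    rw [this]
    exact add_nonneg (Complex.normSq_nonneg _) (Complex.normSq_nonneg _)
  have hcne1 : c ≠ 1 := by
    intro h
    apply hB1
    have h0 : Xᴴ * X = 0 := by rw [hXHX, h]; norm_num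
    have : X = 0 := by
      open ComplexOrder in
      exact Matrix.conjTranspose_mul_self_eq_zero.mp h0
    have hB0 : B = (c : ℂ) • 1 := by
      have := sub_eq_zero.mp (hX ▸ this)
      exact this
    rw [hB0, h]; simp
  have hcnem1 : c ≠ -1 := by
    intro h
    apply hB2
    have h0 : Xᴴ * X = 0 := by rw [hXHX, h]; norm_num
    have : X = 0 := by
      open ComplexOrder in
      exact Matrix.conjTranspose_mul_self_eq_zero.mp h0
    have hB0 : B = (c : ℂ) • 1 := by
      have := sub_eq_zero.mp (hX ▸ this)
      exact this
    rw [hB0, h]; simp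
  have hclt : c < 1 := lt_of_le_of_ne (by nlinarith) hcne1
  have hcgt : -1 < c := lt_of_le_of_ne (by nlinarith) (fun h => hcnem1 h.symm)
  set θ' := Real.arccos c with hθ'def
  have hcos' : Real.cos θ' = c := Real.cos_arccos (by linarith) (by linarith)
  have hθ'mem : θ' ∈ Set.Ioo 0 π := by
    refine ⟨Real.arccos_pos.mpr hclt, lt_of_le_of_ne (Real.arccos_le_pi c) (fun h => ?_)⟩
    exact hcnem1 (by rw [← hcos', h, Real.cos_pi])
  have hs' : 0 < Real.sin θ' := Real.sin_pos_of_pos_of_lt_pi hθ'mem.1 hθ'mem.2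
  have hs'C : ((Real.sin θ' : ℂ)) ≠ 0 := by exact_mod_cast ne_of_gt hs'
  set PB : Matrix (Fin 2) (Fin 2) ℂ := ((Real.sin θ' : ℂ))⁻¹ • X with hPBdef
  have hXPB : (Real.sin θ' : ℂ) • PB = X := smul_inv_smul₀ hs'C X
  have hdB : B = Real.cos θ' • (1 : Matrix (Fin 2) (Fin 2) ℂ) + Real.sin θ' • PB := by
    rw [real_smul_mat, real_smul_mat, hXPB, hcos', hX]
    module
  have hPBH : PBᴴ = -PB := by
    have hsinv : star (((Real.sin θ' : ℂ))⁻¹) = ((Real.sin θ' : ℂ))⁻¹ := by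
      rw [star_inv₀, hstar]
    rw [hPBdef, Matrix.conjTranspose_smul, hXH, hsinv, smul_neg]
  have hPBtr : PB.trace = 0 := by
    rw [hPBdef, Matrix.trace_smul, hX, Matrix.trace_sub, Matrix.trace_smul, Matrix.trace_one,
      htrC]
    simp only [smul_eq_mul, Fintype.card_fin]
    push_cast
    ring
  obtain h | h := main2 θ' PB hθ'mem hPBH hPBtr hdB
  · refine ⟨1, θ', Or.inl rfl, hθ'mem, ?_⟩
    rw [hdB, h]
    module
  · refine ⟨-1, θ', Or.inr rfl, hθ'mem, ?_⟩
    rw [hdB, h]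
    module
end
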